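/- Let q_u be the uniform distribution on a set of size n and let K_RR be the n-ary randomized response mechanism with diagonal entries e^ε/(e^ε + n − 1) and off-diagonal entries 1/(e^ε + n − 1). Then K_RR is row-stochastic, ε-LDP, satisfies q_u K_RR = q_u, and achieves sup_{p ∈ Δ(X)} D_f(p ‖ p K_RR) = ((n−1)/(e^ε + n − 1)) f(0) + (e^ε/(e^ε + n − 1)) f((e^ε + n − 1)/e^ε), which equals the minimax optimal utility Γ_f(q_u, ε). -/

import Mathlib

open Finset

/-- The `f`-divergence between distributions `p` and `r` on `Fin n`. -/
noncomputable def fDiv {n : ℕ} (f : ℝ → ℝ) (p r : Fin n → ℝ) : ℝ :=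
  ∑ x, r x * f (p x / r x)

/-- The output distribution `pK` of the mechanism `K` applied to `p`. -/
def push {n : ℕ} (p : Fin n → ℝ) (K : Matrix (Fin n) (Fin n) ℝ) : Fin n → ℝ :=
  fun j => ∑ i, p i * K i j

/-
If the diagonal entries of a mechanism `K` are at least `c > 0`, then `(pK)_j ≥ c p_j`, so every
likelihood ratio `p_j / (pK)_j` lies in `[0, 1/c]`; bounding `f` there by its chord from `0` to
`1/c` gives `D_f(p ‖ pK) ≤ (1 - c) f(0) + c f(1/c)`, with equality at the point mass on a diagonal
entry equal to `c`. All diagonal entries of randomized response equal `e^ε/(e^ε + n - 1)`, which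
yields its worst case. Conversely, invariance of the uniform prior makes every column of `K` sum
to `1`, and `ε`-LDP then forces `K_00 ≤ e^ε/(e^ε + n - 1)`; since `t ↦ (1 - t) f(0) + t f(1/t)`
is antitone by convexity, the point mass at `0` already attains the randomized-response value
under any admissible `K`.
-/

noncomputable def pointMassDiv (f : ℝ → ℝ) (t : ℝ) : ℝ :=
  (1 - t) * f 0 + t * f (1 / t)

section Convexity

variable {f : ℝ → ℝ}

theorem ConvexOn.le_chord_of_mem_Icc (hf : ConvexOn ℝ (Set.Ici 0) f) {M x : ℝ} (hM : 0 < M)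
    (hx : x ∈ Set.Icc 0 M) : f x ≤ (1 - x / M) * f 0 + x / M * f M := by
  have ht0 : 0 ≤ x / M := div_nonneg hx.1 hM.le
  have ht1 : x / M ≤ 1 := (div_le_one hM).mpr hx.2
  have h := hf.2 Set.self_mem_Ici (Set.mem_Ici.mpr hM.le) (sub_nonneg.mpr ht1) ht0 (by ring)
  simpa [smul_eq_mul, div_mul_cancel₀ x hM.ne'] using h

theorem ConvexOn.mul_apply_div_le (hf : ConvexOn ℝ (Set.Ici 0) f) {M p r : ℝ} (hM : 0 < M)
    (hp : 0 ≤ p) (hpr : p ≤ M * r) :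
    r * f (p / r) ≤ (r - p / M) * f 0 + p / M * f M := by
  rcases (nonneg_of_mul_nonneg_right (hp.trans hpr) hM).eq_or_lt with rfl | hr
  · obtain rfl : p = 0 := le_antisymm (by simpa using hpr) hp
    simp
  · have hx : p / r ∈ Set.Icc 0 M :=
      ⟨div_nonneg hp hr.le, (div_le_iff₀ hr).mpr hpr⟩
    calc r * f (p / r) ≤ r * ((1 - p / r / M) * f 0 + p / r / M * f M) :=
          mul_le_mul_of_nonneg_left (hf.le_chord_of_mem_Icc hM hx) hr.le
      _ = (r - p / M) * f 0 + p / M * f M := by field_simp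

theorem ConvexOn.pointMassDiv_antitoneOn (hf : ConvexOn ℝ (Set.Ici 0) f) :
    AntitoneOn (pointMassDiv f) (Set.Ioi 0) := by
  intro t ht c _ htc
  have key := hf.mul_apply_div_le (M := 1 / t) (p := 1) (r := c) (by simpa using ht)
    zero_le_one (by rwa [one_div_mul_eq_div, le_div_iff₀ ht, one_mul])
  simp only [pointMassDiv]
  rw [div_div_eq_mul_div, one_mul] at key
  linarith

end Convexity

section Divergence

variable {n : ℕ} {f : ℝ → ℝ} {K : Matrix (Fin n) (Fin n) ℝ}

def fDivPushRange (f : ℝ → ℝ) (K : Matrix (Fin n) (Fin n) ℝ) : Set ℝ :=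
  {u | ∃ p : Fin n → ℝ, (∀ i, 0 ≤ p i) ∧ ∑ i, p i = 1 ∧ u = fDiv f p (push p K)}

theorem sum_push_eq_one {p : Fin n → ℝ} (hp : ∑ i, p i = 1) (hrow : ∀ i, ∑ j, K i j = 1) :
    ∑ j, push p K j = 1 := by
  simp only [push]
  rw [Finset.sum_comm]
  simp_rw [← Finset.mul_sum, hrow, mul_one, hp]

theorem mul_diag_le_push {p : Fin n → ℝ} (hp : ∀ i, 0 ≤ p i) (hK : ∀ i j, 0 ≤ K i j)
    (j : Fin n) : p j * K j j ≤ push p K j :=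
  Finset.single_le_sum (f := fun i => p i * K i j) (fun i _ => mul_nonneg (hp i) (hK i j))
    (Finset.mem_univ j)

theorem push_single (K : Matrix (Fin n) (Fin n) ℝ) (i : Fin n) :
    push (Pi.single i 1) K = K i := by
  ext j
  simp [push, Pi.single_apply]

theorem fDiv_single_push (i : Fin n) (hrow : ∑ j, K i j = 1) :
    fDiv f (Pi.single i 1) (push (Pi.single i 1) K) = pointMassDiv f (K i i) := by
  have hoff : ∀ j ∈ ({i}ᶜ : Finset (Fin n)),
      K i j * f ((Pi.single i 1 : Fin n → ℝ) j / K i j) = K i j * f 0 :=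
    fun j hj => by rw [Pi.single_eq_of_ne (by simpa using hj), zero_div]
  have hrest : ∑ j ∈ ({i}ᶜ : Finset (Fin n)), K i j = 1 - K i i := by
    linarith [Fintype.sum_eq_add_sum_compl i (K i)]
  rw [push_single, fDiv, Fintype.sum_eq_add_sum_compl i, sum_congr rfl hoff, ← sum_mul, hrest,
    Pi.single_eq_same, pointMassDiv]
  ring

theorem pointMassDiv_mem_fDivPushRange (i : Fin n) (hrow : ∑ j, K i j = 1) :
    pointMassDiv f (K i i) ∈ fDivPushRange f K :=
  ⟨Pi.single i 1, (single_mem_stdSimplex ℝ i).1, (single_mem_stdSimplex ℝ i).2,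
    (fDiv_single_push i hrow).symm⟩

theorem ConvexOn.fDiv_le_of_le_mul (hf : ConvexOn ℝ (Set.Ici 0) f) {p r : Fin n → ℝ} {M : ℝ}
    (hM : 0 < M) (hp0 : ∀ j, 0 ≤ p j) (hpr : ∀ j, p j ≤ M * r j) (hp : ∑ j, p j = 1)
    (hr : ∑ j, r j = 1) : fDiv f p r ≤ (1 - 1 / M) * f 0 + 1 / M * f M :=
  calc fDiv f p r ≤ ∑ j, ((r j - p j / M) * f 0 + p j / M * f M) :=
        sum_le_sum fun j _ => hf.mul_apply_div_le hM (hp0 j) (hpr j)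
    _ = (1 - 1 / M) * f 0 + 1 / M * f M := by
        simp only [sum_add_distrib, ← sum_mul, sum_sub_distrib, ← sum_div, hp, hr]

theorem ConvexOn.fDiv_push_le_pointMassDiv (hf : ConvexOn ℝ (Set.Ici 0) f)
    (hK : ∀ i j, 0 ≤ K i j) (hrow : ∀ i, ∑ j, K i j = 1) {c : ℝ} (hc : 0 < c)
    (hdiag : ∀ j, c ≤ K j j) {p : Fin n → ℝ} (hp0 : ∀ i, 0 ≤ p i) (hp : ∑ i, p i = 1) :
    fDiv f p (push p K) ≤ pointMassDiv f c := by
  have hpr : ∀ j, p j ≤ 1 / c * push p K j := fun j => by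
    rw [one_div_mul_eq_div, le_div_iff₀ hc]
    exact (mul_le_mul_of_nonneg_left (hdiag j) (hp0 j)).trans (mul_diag_le_push hp0 hK j)
  simpa only [one_div_one_div, pointMassDiv] using
    hf.fDiv_le_of_le_mul (one_div_pos.mpr hc) hp0 hpr hp (sum_push_eq_one hp hrow)

theorem ConvexOn.isGreatest_fDivPushRange (hf : ConvexOn ℝ (Set.Ici 0) f)
    (hK : ∀ i j, 0 ≤ K i j) (hrow : ∀ i, ∑ j, K i j = 1) (i : Fin n) (hpos : 0 < K i i)
    (hmin : ∀ j, K i i ≤ K j j) : IsGreatest (fDivPushRange f K) (pointMassDiv f (K i i)) :=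
  ⟨pointMassDiv_mem_fDivPushRange i (hrow i), by
    rintro _ ⟨p, hp0, hp, rfl⟩
    exact hf.fDiv_push_le_pointMassDiv hK hrow hpos hmin hp0 hp⟩

theorem ConvexOn.pointMassDiv_le_sSup_fDivPushRange (hf : ConvexOn ℝ (Set.Ici 0) f)
    (hK : ∀ i j, 0 ≤ K i j) (hrow : ∀ i, ∑ j, K i j = 1) {c : ℝ} (hc : 0 < c)
    (hdiag : ∀ j, c ≤ K j j) (i : Fin n) :
    pointMassDiv f (K i i) ≤ sSup (fDivPushRange f K) := by
  refine le_csSup ⟨pointMassDiv f c, ?_⟩ (pointMassDiv_mem_fDivPushRange i (hrow i))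
  rintro _ ⟨p, hp0, hp, rfl⟩
  exact hf.fDiv_push_le_pointMassDiv hK hrow hc hdiag hp0 hp

end Divergence

section LocalPrivacy

variable {n : ℕ} {a : ℝ} {K : Matrix (Fin n) (Fin n) ℝ}

theorem sum_ite_eq_add_mul (i : Fin n) (x y : ℝ) :
    ∑ j, (if i = j then x else y) = x + (n - 1) * y := by
  have h : ∀ j, (if i = j then x else y) = y + if i = j then x - y else 0 := fun j => by
    split_ifs <;> ring
  simp only [h, sum_add_distrib, sum_ite_eq, mem_univ, if_true, sum_const, card_univ,
    Fintype.card_fin, nsmul_eq_mul]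
  ring

theorem sum_col_eq_one_of_uniform_invariant [NeZero n]
    (hinv : ∀ j, ∑ i, (1 / (n : ℝ)) * K i j = 1 / (n : ℝ)) (j : Fin n) : ∑ i, K i j = 1 := by
  have hn : (1 / (n : ℝ)) ≠ 0 := one_div_ne_zero (Nat.cast_ne_zero.mpr (NeZero.ne n))
  have h := hinv j
  rw [← mul_sum] at h
  exact mul_left_cancel₀ hn (h.trans (mul_one _).symm)

theorem one_le_mul_diag_of_ldp (hldp : ∀ i j k, K i k ≤ a * K j k) {j : Fin n}
    (hcol : ∑ i, K i j = 1) : 1 ≤ n * a * K j j :=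
  calc 1 = ∑ i, K i j := hcol.symm
    _ ≤ ∑ _i : Fin n, a * K j j := sum_le_sum fun i _ => hldp i j j
    _ = n * a * K j j := by simp [mul_assoc]

theorem mul_diag_le_of_ldp (hldp : ∀ i j k, K i k ≤ a * K j k) {j : Fin n}
    (hcol : ∑ i, K i j = 1) : (a + n - 1) * K j j ≤ a :=
  calc (a + n - 1) * K j j = ∑ i, (if j = i then a * K j j else K j j) := by
        rw [sum_ite_eq_add_mul]; ring
    _ ≤ ∑ i, a * K i j := sum_le_sum fun i _ => by
        split_ifs with h
        · rw [h]
        · exact hldp j i j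
    _ = a := by rw [← mul_sum, hcol, mul_one]

noncomputable def randomizedResponse (n : ℕ) (a : ℝ) : Matrix (Fin n) (Fin n) ℝ :=
  fun i j => if i = j then a / (a + n - 1) else 1 / (a + n - 1)

theorem randomizedResponse_comm (i j : Fin n) :
    randomizedResponse n a i j = randomizedResponse n a j i := by
  simp only [randomizedResponse, eq_comm]

theorem randomizedResponse_diag (j : Fin n) :
    randomizedResponse n a j j = a / (a + n - 1) :=
  if_pos rfl

theorem add_natCast_sub_one_pos [NeZero n] (ha : 1 ≤ a) : 0 < a + n - 1 := by
  linarith [(Nat.one_le_cast.mpr NeZero.one_le : (1 : ℝ) ≤ n)]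

theorem randomizedResponse_sum_row [NeZero n] (ha : 1 ≤ a) (i : Fin n) :
    ∑ j, randomizedResponse n a i j = 1 := by
  have hD := (add_natCast_sub_one_pos (n := n) ha).ne'
  simp only [randomizedResponse, sum_ite_eq_add_mul]
  field_simp
  ring

theorem randomizedResponse_sum_uniform [NeZero n] (ha : 1 ≤ a) (j : Fin n) :
    ∑ i, (1 / (n : ℝ)) * randomizedResponse n a i j = 1 / (n : ℝ) := by
  simp_rw [← mul_sum, randomizedResponse_comm _ j, randomizedResponse_sum_row ha, mul_one]

theorem randomizedResponse_bounds (ha : 1 ≤ a) (i j : Fin n) :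
    1 / (a + n - 1) ≤ randomizedResponse n a i j ∧
      randomizedResponse n a i j ≤ a / (a + n - 1) := by
  have hD : 0 ≤ a + n - 1 := by linarith [(Nat.cast_nonneg n : (0 : ℝ) ≤ n)]
  unfold randomizedResponse
  split_ifs
  · exact ⟨div_le_div_of_nonneg_right ha hD, le_rfl⟩
  · exact ⟨le_rfl, div_le_div_of_nonneg_right ha hD⟩

theorem randomizedResponse_nonneg (ha : 1 ≤ a) (i j : Fin n) : 0 ≤ randomizedResponse n a i j :=
  (one_div_nonneg.mpr (by linarith [(Nat.cast_nonneg n : (0 : ℝ) ≤ n)])).trans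
    (randomizedResponse_bounds ha i j).1

theorem randomizedResponse_ldp (ha : 1 ≤ a) (i j k : Fin n) :
    randomizedResponse n a i k ≤ a * randomizedResponse n a j k :=
  calc randomizedResponse n a i k ≤ a / (a + n - 1) := (randomizedResponse_bounds ha i k).2
    _ = a * (1 / (a + n - 1)) := by ring
    _ ≤ a * randomizedResponse n a j k :=
        mul_le_mul_of_nonneg_left (randomizedResponse_bounds ha j k).1 (by linarith)

theorem ConvexOn.isGreatest_fDivPushRange_randomizedResponse [NeZero n] {f : ℝ → ℝ}
    (hf : ConvexOn ℝ (Set.Ici 0) f) (ha : 1 ≤ a) :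
    IsGreatest (fDivPushRange f (randomizedResponse n a))
      (pointMassDiv f (a / (a + n - 1))) := by
  have hpos : 0 < a / (a + n - 1) := div_pos (by linarith) (add_natCast_sub_one_pos ha)
  simpa only [randomizedResponse_diag] using
    hf.isGreatest_fDivPushRange (randomizedResponse_nonneg ha) (randomizedResponse_sum_row ha) 0
      (by rwa [randomizedResponse_diag]) (fun j => by simp only [randomizedResponse_diag, le_rfl])

theorem ConvexOn.isLeast_sSup_fDivPushRange [NeZero n] {f : ℝ → ℝ}
    (hf : ConvexOn ℝ (Set.Ici 0) f) (ha : 1 ≤ a) :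
    IsLeast {v : ℝ | ∃ K : Matrix (Fin n) (Fin n) ℝ,
        (∀ i j, 0 ≤ K i j) ∧ (∀ i, ∑ j, K i j = 1) ∧ (∀ i j k, K i k ≤ a * K j k) ∧
        (∀ j, ∑ i, (1 / (n : ℝ)) * K i j = 1 / (n : ℝ)) ∧ v = sSup (fDivPushRange f K)}
      (pointMassDiv f (a / (a + n - 1))) := by
  have hD := add_natCast_sub_one_pos (n := n) ha
  refine ⟨⟨randomizedResponse n a, randomizedResponse_nonneg ha, randomizedResponse_sum_row ha,
    randomizedResponse_ldp ha, randomizedResponse_sum_uniform ha,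
    (hf.isGreatest_fDivPushRange_randomizedResponse ha).csSup_eq.symm⟩, ?_⟩
  rintro _ ⟨K, hK, hrow, hldp, hinv, rfl⟩
  have hcol := sum_col_eq_one_of_uniform_invariant hinv
  have hna : 0 < (n : ℝ) * a := mul_pos (Nat.cast_pos.mpr (NeZero.pos n)) (by linarith)
  have hdiag : ∀ j, 1 / (n * a) ≤ K j j := fun j => by
    rw [div_le_iff₀ hna]
    linarith [one_le_mul_diag_of_ldp hldp (hcol j)]
  have h00 : K 0 0 ≤ a / (a + n - 1) := by
    rw [le_div_iff₀ hD]
    linarith [mul_diag_le_of_ldp hldp (hcol 0)]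
  have hc : 0 < 1 / ((n : ℝ) * a) := one_div_pos.mpr hna
  calc pointMassDiv f (a / (a + n - 1)) ≤ pointMassDiv f (K 0 0) :=
        hf.pointMassDiv_antitoneOn (hc.trans_le (hdiag 0))
          (hc.trans_le ((hdiag 0).trans h00)) h00
    _ ≤ sSup (fDivPushRange f K) := hf.pointMassDiv_le_sSup_fDivPushRange hK hrow hc hdiag 0

end LocalPrivacy

theorem randomized_response_optimal_general (n : ℕ) (hn : 2 ≤ n) (ε : ℝ) (hε : 0 ≤ ε)
    (f : ℝ → ℝ) (hconv : ConvexOn ℝ (Set.Ici (0:ℝ)) f)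
    (KRR : Matrix (Fin n) (Fin n) ℝ)
    (hKRR : KRR = fun i j => if i = j then Real.exp ε / (Real.exp ε + n - 1)
      else 1 / (Real.exp ε + n - 1)) :
    (∀ i j, 0 ≤ KRR i j) ∧ (∀ i, ∑ j, KRR i j = 1) ∧
    (∀ i j k, KRR i k ≤ Real.exp ε * KRR j k) ∧
    (∀ j, ∑ i, (1 / (n:ℝ)) * KRR i j = 1 / (n:ℝ)) ∧
    IsGreatest
      {v : ℝ | ∃ p : Fin n → ℝ, (∀ i, 0 ≤ p i) ∧ ∑ i, p i = 1 ∧ v = fDiv f p (push p KRR)}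
      (((n:ℝ) - 1) / (Real.exp ε + n - 1) * f 0 +
        Real.exp ε / (Real.exp ε + n - 1) * f ((Real.exp ε + n - 1) / Real.exp ε)) ∧
    sInf {v : ℝ | ∃ K : Matrix (Fin n) (Fin n) ℝ,
        (∀ i j, 0 ≤ K i j) ∧ (∀ i, ∑ j, K i j = 1) ∧
        (∀ i j k, K i k ≤ Real.exp ε * K j k) ∧
        (∀ j, ∑ i, (1 / (n:ℝ)) * K i j = 1 / (n:ℝ)) ∧
        v = sSup {u : ℝ | ∃ p : Fin n → ℝ,
          (∀ i, 0 ≤ p i) ∧ ∑ i, p i = 1 ∧ u = fDiv f p (push p K)}} =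
      ((n:ℝ) - 1) / (Real.exp ε + n - 1) * f 0 +
        Real.exp ε / (Real.exp ε + n - 1) * f ((Real.exp ε + n - 1) / Real.exp ε) := by
  have : NeZero n := ⟨by omega⟩
  have ha : 1 ≤ Real.exp ε := Real.one_le_exp hε
  have hD := add_natCast_sub_one_pos (n := n) ha
  have hV : ((n : ℝ) - 1) / (Real.exp ε + n - 1) * f 0 +
      Real.exp ε / (Real.exp ε + n - 1) * f ((Real.exp ε + n - 1) / Real.exp ε) =
      pointMassDiv f (Real.exp ε / (Real.exp ε + n - 1)) := by
    rw [pointMassDiv, one_div_div, one_sub_div hD.ne']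
    ring
  subst hKRR
  rw [hV]
  exact ⟨randomizedResponse_nonneg ha, randomizedResponse_sum_row ha, randomizedResponse_ldp ha,
    randomizedResponse_sum_uniform ha, hconv.isGreatest_fDivPushRange_randomizedResponse ha,
    (hconv.isLeast_sSup_fDivPushRange ha).csInf_eq⟩

/-- For the uniform prior, the `n`-ary randomized response mechanism is a valid ε-LDP
mechanism keeping the uniform distribution invariant, its worst-case `f`-divergence equals
`((n-1)/(e^ε+n-1)) f(0) + (e^ε/(e^ε+n-1)) f((e^ε+n-1)/e^ε)`, and this value is the
minimax optimal utility `Γ_f(q_u, ε)`. -/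
theorem randomized_response_optimal (n : ℕ) (hn : 2 ≤ n) (ε : ℝ) (hε : 0 ≤ ε)
    (f : ℝ → ℝ) (hconv : ConvexOn ℝ (Set.Ici (0:ℝ)) f) (hf1 : f 1 = 0)
    (KRR : Matrix (Fin n) (Fin n) ℝ)
    (hKRR : KRR = fun i j => if i = j then Real.exp ε / (Real.exp ε + n - 1)
      else 1 / (Real.exp ε + n - 1)) :
    (∀ i j, 0 ≤ KRR i j) ∧ (∀ i, ∑ j, KRR i j = 1) ∧
    (∀ i j k, KRR i k ≤ Real.exp ε * KRR j k) ∧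
    (∀ j, ∑ i, (1 / (n:ℝ)) * KRR i j = 1 / (n:ℝ)) ∧
    IsGreatest
      {v : ℝ | ∃ p : Fin n → ℝ, (∀ i, 0 ≤ p i) ∧ ∑ i, p i = 1 ∧ v = fDiv f p (push p KRR)}
      (((n:ℝ) - 1) / (Real.exp ε + n - 1) * f 0 +
        Real.exp ε / (Real.exp ε + n - 1) * f ((Real.exp ε + n - 1) / Real.exp ε)) ∧
    sInf {v : ℝ | ∃ K : Matrix (Fin n) (Fin n) ℝ,
        (∀ i j, 0 ≤ K i j) ∧ (∀ i, ∑ j, K i j = 1) ∧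
        (∀ i j k, K i k ≤ Real.exp ε * K j k) ∧
        (∀ j, ∑ i, (1 / (n:ℝ)) * K i j = 1 / (n:ℝ)) ∧
        v = sSup {u : ℝ | ∃ p : Fin n → ℝ,
          (∀ i, 0 ≤ p i) ∧ ∑ i, p i = 1 ∧ u = fDiv f p (push p K)}} =
      ((n:ℝ) - 1) / (Real.exp ε + n - 1) * f 0 +
        Real.exp ε / (Real.exp ε + n - 1) * f ((Real.exp ε + n - 1) / Real.exp ε) :=
  randomized_response_optimal_general n hn ε hε f hconv KRR hKRR
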